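/- Let A ∈ ℝ^{k×H}, b ∈ ℝ^k, 𝒢 = {g : Gg ≤ q} nonempty, λ_g > 0. If g⋆ minimizes ‖Ag−b‖₂² + λ_g‖g‖₂² over 𝒢, then g⋆ minimizes the min-max problem min_{g∈𝒢} max_{‖[Δ ξ]‖_F ≤ β'} ‖(A+Δ)g − (b+ξ)‖₂ with β' = λ_g·sqrt(‖g⋆‖₂²+1)/‖Ag⋆−b‖₂ if Ag⋆ ≠ b, and β' = λ_g·sqrt(‖g⋆‖₂²+1) otherwise. -/
import Mathlib

open Matrix BigOperators

/-- Euclidean norm of a real vector. -/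
noncomputable def eunorm {ι : Type*} [Fintype ι] (v : ι → ℝ) : ℝ :=
  Real.sqrt (∑ i, v i ^ 2)

/-- Frobenius norm of a real matrix. -/
noncomputable def frnorm {ι κ : Type*} [Fintype ι] [Fintype κ] (M : Matrix ι κ ℝ) : ℝ :=
  Real.sqrt (∑ i, ∑ j, M i j ^ 2)

namespace RobustAux

variable {ι κ : Type*} [Fintype ι] [Fintype κ]

lemma eunorm_nonneg (v : ι → ℝ) : 0 ≤ eunorm v := Real.sqrt_nonneg _

lemma eunorm_sq (v : ι → ℝ) : eunorm v ^ 2 = ∑ i, v i ^ 2 :=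
  Real.sq_sqrt (Finset.sum_nonneg fun _ _ => sq_nonneg _)

lemma frnorm_nonneg (M : Matrix ι κ ℝ) : 0 ≤ frnorm M := Real.sqrt_nonneg _

lemma frnorm_sq (M : Matrix ι κ ℝ) : frnorm M ^ 2 = ∑ i, ∑ j, M i j ^ 2 :=
  Real.sq_sqrt (Finset.sum_nonneg fun _ _ => Finset.sum_nonneg fun _ _ => sq_nonneg _)

lemma eunorm_le_of_sq_le {v : ι → ℝ} {c : ℝ} (hc : 0 ≤ c) (h : ∑ i, v i ^ 2 ≤ c ^ 2) :
    eunorm v ≤ c := by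
  have h2 := Real.sqrt_le_sqrt h
  rwa [Real.sqrt_sq hc] at h2

lemma cauchy (u v : ι → ℝ) : ∑ i, u i * v i ≤ eunorm u * eunorm v :=
  Real.sum_mul_le_sqrt_mul_sqrt _ u v

lemma sum_sq_expand (x y : ι → ℝ) (t : ℝ) :
    ∑ i, (x i + t * y i) ^ 2
      = ∑ i, x i ^ 2 + 2 * t * (∑ i, x i * y i) + t ^ 2 * ∑ i, y i ^ 2 := by
  rw [Finset.mul_sum, Finset.mul_sum, ← Finset.sum_add_distrib, ← Finset.sum_add_distrib]
  exact Finset.sum_congr rfl fun i _ => by ring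

lemma eunorm_add_le (u v : ι → ℝ) : eunorm (u + v) ≤ eunorm u + eunorm v := by
  apply eunorm_le_of_sq_le (add_nonneg (eunorm_nonneg u) (eunorm_nonneg v))
  have h1 := eunorm_sq u
  have h2 := eunorm_sq v
  have h3 := cauchy u v
  have he : ∑ i, (u + v) i ^ 2
      = ∑ i, u i ^ 2 + 2 * 1 * (∑ i, u i * v i) + 1 ^ 2 * ∑ i, v i ^ 2 := by
    rw [← sum_sq_expand u v 1]
    exact Finset.sum_congr rfl fun i _ => by simp
  rw [he]; nlinarith [eunorm_nonneg u, eunorm_nonneg v]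

lemma eunorm_mulVec_le (M : Matrix ι κ ℝ) (v : κ → ℝ) :
    eunorm (M.mulVec v) ≤ frnorm M * eunorm v := by
  apply eunorm_le_of_sq_le (mul_nonneg (frnorm_nonneg M) (eunorm_nonneg v))
  rw [mul_pow, frnorm_sq, eunorm_sq]
  calc ∑ i, (M.mulVec v) i ^ 2 ≤ ∑ i, ((∑ j, M i j ^ 2) * ∑ j, v j ^ 2) := by
        apply Finset.sum_le_sum; intro i _
        simpa [Matrix.mulVec, dotProduct] using
          Finset.sum_mul_sq_le_sq_mul_sq Finset.univ (M i) v
      _ = (∑ i, ∑ j, M i j ^ 2) * ∑ j, v j ^ 2 := by rw [← Finset.sum_mul]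

lemma eunorm_smul (t : ℝ) (v : ι → ℝ) : eunorm (fun i => t * v i) = |t| * eunorm v := by
  unfold eunorm
  rw [show ∑ i, (t * v i) ^ 2 = t ^ 2 * ∑ i, v i ^ 2 by
      rw [Finset.mul_sum]; exact Finset.sum_congr rfl fun i _ => by ring,
    Real.sqrt_mul (sq_nonneg t), Real.sqrt_sq_eq_abs]

lemma eunorm_eq_zero_iff (v : ι → ℝ) : eunorm v = 0 ↔ v = 0 := by
  constructor
  · intro h
    have h2 : ∑ i, v i ^ 2 = 0 := by
      have := eunorm_sq v; rw [h] at this; simpa using this.symm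
    funext i
    have := (Finset.sum_eq_zero_iff_of_nonneg (fun i _ => sq_nonneg (v i))).1 h2 i
      (Finset.mem_univ i)
    exact pow_eq_zero_iff (by norm_num) |>.1 this
  · rintro rfl; simp [eunorm]

lemma nonneg_of_small_t (P Q : ℝ) (hQ : 0 ≤ Q)
    (h : ∀ t : ℝ, 0 < t → t ≤ 1 → 0 ≤ t * P + t ^ 2 * Q) : 0 ≤ P := by
  by_contra hP
  push_neg at hP
  set t : ℝ := min 1 (-P / (2 * Q + 1)) with ht
  have hd : 0 < -P / (2 * Q + 1) := div_pos (by linarith) (by linarith)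
  have htpos : 0 < t := lt_min one_pos hd
  have ht1 : t ≤ 1 := min_le_left _ _
  have ht2 : t ≤ -P / (2 * Q + 1) := min_le_right _ _
  have h0 := h t htpos ht1
  have h1 : 0 ≤ P + t * Q := by nlinarith
  have h3 : t * (2 * Q + 1) ≤ -P := (le_div_iff₀ (by linarith)).1 ht2
  nlinarith

end RobustAux

open RobustAux

set_option maxHeartbeats 2000000 in
open Classical in
theorem corollary_robustness_A_and_b {k H r : ℕ}
    (A : Matrix (Fin k) (Fin H) ℝ) (b : Fin k → ℝ)
    (G : Matrix (Fin r) (Fin H) ℝ) (q : Fin r → ℝ)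
    (𝒢 : Set (Fin H → ℝ))
    (h𝒢 : 𝒢 = {g | ∀ i, G.mulVec g i ≤ q i}) (hne : 𝒢.Nonempty)
    (lg : ℝ) (hlg : 0 < lg)
    (gstar : Fin H → ℝ) (hmem : gstar ∈ 𝒢)
    (hmin : ∀ g ∈ 𝒢,
      eunorm (A.mulVec gstar - b) ^ 2 + lg * eunorm gstar ^ 2 ≤
        eunorm (A.mulVec g - b) ^ 2 + lg * eunorm g ^ 2)
    (β' : ℝ)
    (hβ' : β' = if A.mulVec gstar ≠ b then
        lg * Real.sqrt (eunorm gstar ^ 2 + 1) / eunorm (A.mulVec gstar - b)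
      else lg * Real.sqrt (eunorm gstar ^ 2 + 1)) :
    ∀ g ∈ 𝒢,
      sSup {rr : ℝ | ∃ (Δ : Matrix (Fin k) (Fin H) ℝ) (ξ : Fin k → ℝ),
          frnorm (Matrix.of fun i => Sum.elim (Δ i) (fun _ : Unit => ξ i)) ≤ β' ∧
          rr = eunorm ((A + Δ).mulVec gstar - (b + ξ))} ≤
        sSup {rr : ℝ | ∃ (Δ : Matrix (Fin k) (Fin H) ℝ) (ξ : Fin k → ℝ),
          frnorm (Matrix.of fun i => Sum.elim (Δ i) (fun _ : Unit => ξ i)) ≤ β' ∧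
          rr = eunorm ((A + Δ).mulVec g - (b + ξ))} := by
  intro g hg
  have hs1pos : (0:ℝ) < eunorm gstar ^ 2 + 1 := by positivity
  have hsspos : 0 < Real.sqrt (eunorm gstar ^ 2 + 1) := Real.sqrt_pos.2 hs1pos
  have hβpos : 0 < β' := by
    rw [hβ']
    split_ifs with hcase
    · have hc : A.mulVec gstar - b ≠ 0 := sub_ne_zero_of_ne hcase
      have ha : eunorm (A.mulVec gstar - b) ≠ 0 := fun h => hc ((eunorm_eq_zero_iff _).1 h)
      have hapos : 0 < eunorm (A.mulVec gstar - b) :=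
        lt_of_le_of_ne (eunorm_nonneg _) (Ne.symm ha)
      exact div_pos (mul_pos hlg hsspos) hapos
    · exact mul_pos hlg hsspos
  -- the zero perturbation matrix
  have hM0 : ∀ g' : Fin H → ℝ,
      eunorm (A.mulVec g' - b) ∈ {rr : ℝ | ∃ (Δ : Matrix (Fin k) (Fin H) ℝ) (ξ : Fin k → ℝ),
        frnorm (Matrix.of fun i => Sum.elim (Δ i) (fun _ : Unit => ξ i)) ≤ β' ∧
        rr = eunorm ((A + Δ).mulVec g' - (b + ξ))} := by
    intro g'
    refine ⟨0, 0, ?_, ?_⟩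
    · have hz : ∀ (i : Fin k) (j : Fin H ⊕ Unit),
          (Matrix.of fun i => Sum.elim ((0 : Matrix (Fin k) (Fin H) ℝ) i)
            (fun _ : Unit => (0 : Fin k → ℝ) i)) i j = 0 := by
        rintro i (j | j) <;> rfl
      unfold frnorm
      simp only [hz]
      simpa using hβpos.le
    · simp
  rcases Nat.eq_zero_or_pos k with hk | hk
  · -- degenerate case k = 0 : everything is zero
    subst hk
    have hz : ∀ v : Fin 0 → ℝ, eunorm v = 0 := fun v => by simp [eunorm]
    refine le_trans (b := (0:ℝ)) (csSup_le ⟨_, hM0 gstar⟩ ?_) ?_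
    · rintro rr ⟨Δ, ξ, -, rfl⟩; exact (hz _).le
    · refine le_csSup ⟨0, ?_⟩ ?_
      · rintro rr ⟨Δ, ξ, -, rfl⟩; exact (hz _).le
      · have := hM0 g
        rwa [hz] at this
  · -- main case k > 0
    set d : Fin H → ℝ := g - gstar with hd
    -- variational inequality
    have hQ0 : (0:ℝ) ≤ ∑ i, (A.mulVec d) i ^ 2 + lg * ∑ i, d i ^ 2 := by positivity
    have hVI : 0 ≤ (∑ i, (A.mulVec gstar - b) i * (A.mulVec d) i)
        + lg * ∑ i, gstar i * d i := by
      have key : ∀ t : ℝ, 0 < t → t ≤ 1 →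
          0 ≤ t * (2 * ((∑ i, (A.mulVec gstar - b) i * (A.mulVec d) i)
                + lg * ∑ i, gstar i * d i))
            + t ^ 2 * (∑ i, (A.mulVec d) i ^ 2 + lg * ∑ i, d i ^ 2) := by
        intro t ht0 ht1
        have hmemt : gstar + t • d ∈ 𝒢 := by
          rw [h𝒢] at hg hmem ⊢
          intro i
          have h1 := hg i
          have h2 := hmem i
          have hlin : G.mulVec (gstar + t • d) i
              = G.mulVec gstar i + t * (G.mulVec g i - G.mulVec gstar i) := by
            rw [Matrix.mulVec_add, Matrix.mulVec_smul, hd, Matrix.mulVec_sub]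
            simp [smul_eq_mul]
          rw [hlin]; nlinarith
        have hF := hmin _ hmemt
        have e1 : eunorm (A.mulVec (gstar + t • d) - b) ^ 2
            = eunorm (A.mulVec gstar - b) ^ 2
              + 2 * t * (∑ i, (A.mulVec gstar - b) i * (A.mulVec d) i)
              + t ^ 2 * ∑ i, (A.mulVec d) i ^ 2 := by
          rw [eunorm_sq, eunorm_sq]
          rw [show (A.mulVec (gstar + t • d) - b)
              = fun i => (A.mulVec gstar - b) i + t * (A.mulVec d) i by
            funext i
            simp only [Matrix.mulVec_add, Matrix.mulVec_smul, Pi.add_apply, Pi.sub_apply,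
              Pi.smul_apply, smul_eq_mul]
            ring]
          exact sum_sq_expand _ _ _
        have e2 : eunorm (gstar + t • d) ^ 2
            = eunorm gstar ^ 2 + 2 * t * (∑ i, gstar i * d i) + t ^ 2 * ∑ i, d i ^ 2 := by
          rw [eunorm_sq, eunorm_sq]
          rw [show (gstar + t • d) = fun i => gstar i + t * d i by
            funext i; simp [smul_eq_mul]]
          exact sum_sq_expand _ _ _
        rw [e1, e2] at hF
        nlinarith [hF]
      linarith [nonneg_of_small_t _ _ hQ0 key]
    -- abbreviations
    have hsgpos : 0 < Real.sqrt (eunorm g ^ 2 + 1) := Real.sqrt_pos.2 (by positivity)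
    have hss2 : Real.sqrt (eunorm gstar ^ 2 + 1) ^ 2 = eunorm gstar ^ 2 + 1 :=
      Real.sq_sqrt (by positivity)
    have hsg2 : Real.sqrt (eunorm g ^ 2 + 1) ^ 2 = eunorm g ^ 2 + 1 :=
      Real.sq_sqrt (by positivity)
    -- Cauchy-Schwarz facts
    have hCS1 : ∑ i, (A.mulVec gstar - b) i * (A.mulVec g - b) i
        ≤ eunorm (A.mulVec gstar - b) * eunorm (A.mulVec g - b) := cauchy _ _
    have hCS2 : ∑ i, gstar i * g i + 1
        ≤ Real.sqrt (eunorm gstar ^ 2 + 1) * Real.sqrt (eunorm g ^ 2 + 1) := by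
      have h1 := Finset.sum_mul_sq_le_sq_mul_sq Finset.univ gstar g
      have h2 : (Real.sqrt (eunorm gstar ^ 2 + 1) * Real.sqrt (eunorm g ^ 2 + 1)) ^ 2
          = (eunorm gstar ^ 2 + 1) * (eunorm g ^ 2 + 1) := by rw [mul_pow, hss2, hsg2]
      have h3 := eunorm_sq gstar
      have h4 := eunorm_sq g
      have h5 := cauchy gstar g
      nlinarith [mul_nonneg hsspos.le hsgpos.le, sq_nonneg (eunorm gstar - eunorm g),
        eunorm_nonneg gstar, eunorm_nonneg g,
        sq_nonneg (∑ i, gstar i * g i + 1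
          + Real.sqrt (eunorm gstar ^ 2 + 1) * Real.sqrt (eunorm g ^ 2 + 1))]
    -- decomposition identities
    have hid1 : ∑ i, (A.mulVec gstar - b) i * (A.mulVec g - b) i
        = ∑ i, (A.mulVec gstar - b) i ^ 2
          + ∑ i, (A.mulVec gstar - b) i * (A.mulVec d) i := by
      rw [← Finset.sum_add_distrib]
      refine Finset.sum_congr rfl fun i _ => ?_
      have : (A.mulVec g - b) i = (A.mulVec gstar - b) i + (A.mulVec d) i := by
        simp only [hd, Matrix.mulVec_sub, Pi.sub_apply]
        ring
      rw [this]; ring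
    have hid2 : ∑ i, gstar i * g i
        = ∑ i, gstar i ^ 2 + ∑ i, gstar i * d i := by
      rw [← Finset.sum_add_distrib]
      refine Finset.sum_congr rfl fun i _ => ?_
      simp only [hd, Pi.sub_apply]
      ring
    -- key inequality
    have hKI : eunorm (A.mulVec gstar - b) + β' * Real.sqrt (eunorm gstar ^ 2 + 1)
        ≤ eunorm (A.mulVec g - b) + β' * Real.sqrt (eunorm g ^ 2 + 1) := by
      by_cases hzero : A.mulVec gstar = b
      · have hcs0 : A.mulVec gstar - b = 0 := sub_eq_zero_of_eq hzero
        have has0 : eunorm (A.mulVec gstar - b) = 0 := (eunorm_eq_zero_iff _).2 hcs0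
        have hβ : β' = lg * Real.sqrt (eunorm gstar ^ 2 + 1) := by
          rw [hβ', if_neg (by simp [hzero])]
        have hz1 : ∑ i, (A.mulVec gstar - b) i * (A.mulVec d) i = 0 := by
          simp only [hcs0, Pi.zero_apply, zero_mul, Finset.sum_const_zero]
        rw [hz1, zero_add] at hVI
        have h6 : 0 ≤ ∑ i, gstar i * d i := by
          by_contra hneg
          push_neg at hneg
          nlinarith
        have h7 : Real.sqrt (eunorm gstar ^ 2 + 1) ^ 2
            ≤ Real.sqrt (eunorm gstar ^ 2 + 1) * Real.sqrt (eunorm g ^ 2 + 1) := by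
          have h8 := eunorm_sq gstar
          linarith [hCS2, hid2, h6]
        rw [has0, hβ]
        nlinarith [eunorm_nonneg (A.mulVec g - b)]
      · have hβ : β' = lg * Real.sqrt (eunorm gstar ^ 2 + 1) / eunorm (A.mulVec gstar - b) := by
          rw [hβ', if_pos hzero]
        have hcsne : A.mulVec gstar - b ≠ 0 := sub_ne_zero_of_ne hzero
        have haspos : 0 < eunorm (A.mulVec gstar - b) :=
          lt_of_le_of_ne (eunorm_nonneg _) fun h => hcsne ((eunorm_eq_zero_iff _).1 h.symm)
        have h8 : lg * (∑ i, gstar i * g i + 1)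
            = lg * Real.sqrt (eunorm gstar ^ 2 + 1) ^ 2 + lg * ∑ i, gstar i * d i := by
          rw [hid2, hss2, eunorm_sq]
          ring
        have h7 : lg * (∑ i, gstar i * g i + 1)
            ≤ lg * (Real.sqrt (eunorm gstar ^ 2 + 1) * Real.sqrt (eunorm g ^ 2 + 1)) :=
          mul_le_mul_of_nonneg_left hCS2 hlg.le
        have hcs2eq : eunorm (A.mulVec gstar - b) ^ 2 = ∑ i, (A.mulVec gstar - b) i ^ 2 :=
          eunorm_sq _
        have hmain : eunorm (A.mulVec gstar - b) ^ 2
              + lg * Real.sqrt (eunorm gstar ^ 2 + 1) ^ 2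
            ≤ eunorm (A.mulVec gstar - b) * eunorm (A.mulVec g - b)
              + lg * (Real.sqrt (eunorm gstar ^ 2 + 1) * Real.sqrt (eunorm g ^ 2 + 1)) := by
          linarith [hCS1, hid1, h7, h8, hVI]
        have hCa : β' * eunorm (A.mulVec gstar - b) = lg * Real.sqrt (eunorm gstar ^ 2 + 1) := by
          rw [hβ]; exact div_mul_cancel₀ _ haspos.ne'
        have hfinal : (eunorm (A.mulVec gstar - b) + β' * Real.sqrt (eunorm gstar ^ 2 + 1))
              * eunorm (A.mulVec gstar - b)
            ≤ (eunorm (A.mulVec g - b) + β' * Real.sqrt (eunorm g ^ 2 + 1))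
              * eunorm (A.mulVec gstar - b) := by
          calc (eunorm (A.mulVec gstar - b) + β' * Real.sqrt (eunorm gstar ^ 2 + 1))
                * eunorm (A.mulVec gstar - b)
              = eunorm (A.mulVec gstar - b) ^ 2
                + Real.sqrt (eunorm gstar ^ 2 + 1) * (β' * eunorm (A.mulVec gstar - b)) := by
                ring
            _ = eunorm (A.mulVec gstar - b) ^ 2
                + lg * Real.sqrt (eunorm gstar ^ 2 + 1) ^ 2 := by rw [hCa]; ring
            _ ≤ eunorm (A.mulVec gstar - b) * eunorm (A.mulVec g - b)
                + lg * (Real.sqrt (eunorm gstar ^ 2 + 1) * Real.sqrt (eunorm g ^ 2 + 1)) :=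
                hmain
            _ = eunorm (A.mulVec gstar - b) * eunorm (A.mulVec g - b)
                + Real.sqrt (eunorm g ^ 2 + 1) * (lg * Real.sqrt (eunorm gstar ^ 2 + 1)) := by
                ring
            _ = eunorm (A.mulVec gstar - b) * eunorm (A.mulVec g - b)
                + Real.sqrt (eunorm g ^ 2 + 1) * (β' * eunorm (A.mulVec gstar - b)) := by
                rw [hCa]
            _ = (eunorm (A.mulVec g - b) + β' * Real.sqrt (eunorm g ^ 2 + 1))
                * eunorm (A.mulVec gstar - b) := by ring
        exact le_of_mul_le_mul_right hfinal haspos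
    -- uniform upper bound on perturbed residuals
    have hub : ∀ (g' : Fin H → ℝ) (Δ : Matrix (Fin k) (Fin H) ℝ) (ξ : Fin k → ℝ),
        frnorm (Matrix.of fun i => Sum.elim (Δ i) (fun _ : Unit => ξ i)) ≤ β' →
        eunorm ((A + Δ).mulVec g' - (b + ξ))
          ≤ eunorm (A.mulVec g' - b) + β' * Real.sqrt (eunorm g' ^ 2 + 1) := by
      intro g' Δ ξ hfr
      have hres : (A + Δ).mulVec g' - (b + ξ)
          = (A.mulVec g' - b)
            + (Matrix.of fun i => Sum.elim (Δ i) (fun _ : Unit => ξ i)).mulVec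
                (Sum.elim g' (fun _ : Unit => (-1 : ℝ))) := by
        funext i
        simp only [Pi.add_apply, Pi.sub_apply, Matrix.add_mulVec, Matrix.mulVec, dotProduct,
          Matrix.add_apply, Matrix.of_apply, Fintype.sum_sum_type, Sum.elim_inl, Sum.elim_inr,
          Finset.univ_unique, Finset.sum_singleton, add_mul, Finset.sum_add_distrib]
        ring
      have hw : eunorm (Sum.elim g' (fun _ : Unit => (-1 : ℝ)))
          = Real.sqrt (eunorm g' ^ 2 + 1) := by
        have h3 : ∑ j : Fin H ⊕ Unit, (Sum.elim g' (fun _ : Unit => (-1:ℝ))) j ^ 2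
            = eunorm g' ^ 2 + 1 := by
          rw [Fintype.sum_sum_type, eunorm_sq]
          simp
        have h4 : eunorm (Sum.elim g' (fun _ : Unit => (-1:ℝ)))
            = Real.sqrt (∑ j : Fin H ⊕ Unit, (Sum.elim g' (fun _ : Unit => (-1:ℝ))) j ^ 2) :=
          rfl
        rw [h4, h3]
      have h6 : eunorm ((Matrix.of fun i => Sum.elim (Δ i) (fun _ : Unit => ξ i)).mulVec
            (Sum.elim g' (fun _ : Unit => (-1 : ℝ))))
          ≤ β' * Real.sqrt (eunorm g' ^ 2 + 1) := by
        refine (eunorm_mulVec_le _ _).trans ?_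
        rw [hw]
        exact mul_le_mul_of_nonneg_right hfr (Real.sqrt_nonneg _)
      rw [hres]
      exact (eunorm_add_le _ _).trans (by linarith)
    -- worst case attaining the bound for g
    have hsg2' : Real.sqrt (eunorm g ^ 2 + 1) ^ 2 = ∑ j, g j ^ 2 + 1 := by
      rw [hsg2, eunorm_sq]
    obtain ⟨u, hu1, hu2⟩ : ∃ u : Fin k → ℝ, (∑ i, u i ^ 2 = 1) ∧
        eunorm (fun i => (A.mulVec g - b) i + (β' * Real.sqrt (eunorm g ^ 2 + 1)) * u i)
          = eunorm (A.mulVec g - b) + β' * Real.sqrt (eunorm g ^ 2 + 1) := by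
      by_cases hc : A.mulVec g - b = 0
      · have hsum1 : ∑ i : Fin k, (if i = (⟨0, hk⟩ : Fin k) then (1:ℝ) else 0) ^ 2 = 1 := by
          rw [Finset.sum_eq_single (⟨0, hk⟩ : Fin k)]
          · simp
          · intro i _ hne'
            simp [hne']
          · intro h
            exact absurd (Finset.mem_univ _) h
        refine ⟨fun i => if i = (⟨0, hk⟩ : Fin k) then 1 else 0, hsum1, ?_⟩
        have hag0 : eunorm (A.mulVec g - b) = 0 := (eunorm_eq_zero_iff _).2 hc
        have hfe : (fun i => (A.mulVec g - b) i
              + (β' * Real.sqrt (eunorm g ^ 2 + 1)) * (if i = (⟨0, hk⟩ : Fin k) then (1:ℝ) else 0))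
            = fun i => (β' * Real.sqrt (eunorm g ^ 2 + 1))
                * (if i = (⟨0, hk⟩ : Fin k) then (1:ℝ) else 0) := by
          funext i
          rw [show (A.mulVec g - b) i = 0 from by rw [hc]; rfl]
          ring
        rw [hfe, eunorm_smul]
        have h1 : eunorm (fun i => if i = (⟨0, hk⟩ : Fin k) then (1:ℝ) else 0) = 1 := by
          have h2 : eunorm (fun i => if i = (⟨0, hk⟩ : Fin k) then (1:ℝ) else 0)
              = Real.sqrt (∑ i : Fin k, (if i = (⟨0, hk⟩ : Fin k) then (1:ℝ) else 0) ^ 2) := rfl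
          rw [h2, hsum1]
          exact Real.sqrt_one
        rw [h1, abs_of_nonneg (mul_nonneg hβpos.le hsgpos.le), hag0]
        ring
      · have hagpos : 0 < eunorm (A.mulVec g - b) :=
          lt_of_le_of_ne (eunorm_nonneg _) fun h => hc ((eunorm_eq_zero_iff _).1 h.symm)
        refine ⟨fun i => (A.mulVec g - b) i / eunorm (A.mulVec g - b), ?_, ?_⟩
        · rw [show ∑ i, ((A.mulVec g - b) i / eunorm (A.mulVec g - b)) ^ 2
              = (∑ i, (A.mulVec g - b) i ^ 2) / eunorm (A.mulVec g - b) ^ 2 by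
            rw [Finset.sum_div]
            exact Finset.sum_congr rfl fun i _ => by rw [div_pow]]
          rw [← eunorm_sq]
          exact div_self (pow_ne_zero _ hagpos.ne')
        · have hfe : (fun i => (A.mulVec g - b) i
                + (β' * Real.sqrt (eunorm g ^ 2 + 1))
                  * ((A.mulVec g - b) i / eunorm (A.mulVec g - b)))
              = fun i => (1 + β' * Real.sqrt (eunorm g ^ 2 + 1) / eunorm (A.mulVec g - b))
                  * (A.mulVec g - b) i := by
            funext i
            field_simp
          rw [hfe, eunorm_smul, abs_of_nonneg (by positivity)]
          field_simp
    set Δw : Matrix (Fin k) (Fin H) ℝ :=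
      Matrix.of fun i j => (β' / Real.sqrt (eunorm g ^ 2 + 1)) * u i * g j with hΔw
    set ξw : Fin k → ℝ :=
      fun i => -((β' / Real.sqrt (eunorm g ^ 2 + 1)) * u i) with hξw
    have hfrw : frnorm (Matrix.of fun i => Sum.elim (Δw i) (fun _ : Unit => ξw i)) ≤ β' := by
      have hrow : ∀ i : Fin k, ∑ j : Fin H ⊕ Unit,
          (Matrix.of fun i => Sum.elim (Δw i) (fun _ : Unit => ξw i)) i j ^ 2
            = (β' / Real.sqrt (eunorm g ^ 2 + 1)) ^ 2 * u i ^ 2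
                * Real.sqrt (eunorm g ^ 2 + 1) ^ 2 := by
        intro i
        rw [Fintype.sum_sum_type]
        simp only [Matrix.of_apply, Sum.elim_inl, Sum.elim_inr, hΔw, hξw,
          Finset.univ_unique, Finset.sum_singleton]
        rw [show ∑ j : Fin H, ((β' / Real.sqrt (eunorm g ^ 2 + 1)) * u i * g j) ^ 2
            = (β' / Real.sqrt (eunorm g ^ 2 + 1)) ^ 2 * u i ^ 2 * ∑ j, g j ^ 2 by
          rw [Finset.mul_sum]
          exact Finset.sum_congr rfl fun j _ => by ring]
        rw [hsg2']
        ring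
      have htot : ∑ i, ∑ j : Fin H ⊕ Unit,
          (Matrix.of fun i => Sum.elim (Δw i) (fun _ : Unit => ξw i)) i j ^ 2 = β' ^ 2 := by
        rw [Finset.sum_congr rfl fun i _ => hrow i]
        rw [show ∑ i, (β' / Real.sqrt (eunorm g ^ 2 + 1)) ^ 2 * u i ^ 2
              * Real.sqrt (eunorm g ^ 2 + 1) ^ 2
            = (β' / Real.sqrt (eunorm g ^ 2 + 1)) ^ 2 * Real.sqrt (eunorm g ^ 2 + 1) ^ 2
              * ∑ i, u i ^ 2 by
          rw [Finset.mul_sum]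
          exact Finset.sum_congr rfl fun i _ => by ring]
        rw [hu1, div_pow, mul_one, div_mul_cancel₀]
        exact pow_ne_zero _ hsgpos.ne'
      unfold frnorm
      rw [htot, Real.sqrt_sq hβpos.le]
    have hresw : (A + Δw).mulVec g - (b + ξw)
        = fun i => (A.mulVec g - b) i + (β' * Real.sqrt (eunorm g ^ 2 + 1)) * u i := by
      funext i
      have h1 : Δw.mulVec g i
          = (β' / Real.sqrt (eunorm g ^ 2 + 1)) * u i * (∑ j, g j ^ 2) := by
        simp only [Matrix.mulVec, dotProduct, hΔw, Matrix.of_apply]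
        rw [Finset.mul_sum]
        exact Finset.sum_congr rfl fun j _ => by ring
      have h2 : (A + Δw).mulVec g i = A.mulVec g i + Δw.mulVec g i := by
        rw [Matrix.add_mulVec]; rfl
      simp only [Pi.sub_apply, Pi.add_apply]
      rw [h2, h1]
      simp only [hξw]
      have h3 : (β' / Real.sqrt (eunorm g ^ 2 + 1)) * u i * (∑ j, g j ^ 2)
            + (β' / Real.sqrt (eunorm g ^ 2 + 1)) * u i
          = β' * Real.sqrt (eunorm g ^ 2 + 1) * u i := by
        have h4 : (β' / Real.sqrt (eunorm g ^ 2 + 1)) * u i * (∑ j, g j ^ 2 + 1)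
            = (β' / Real.sqrt (eunorm g ^ 2 + 1)) * u i
              * Real.sqrt (eunorm g ^ 2 + 1) ^ 2 := by rw [hsg2']
        have h5 : (β' / Real.sqrt (eunorm g ^ 2 + 1)) * u i
              * Real.sqrt (eunorm g ^ 2 + 1) ^ 2
            = β' * Real.sqrt (eunorm g ^ 2 + 1) * u i := by
          have hc6 : β' / Real.sqrt (eunorm g ^ 2 + 1) * Real.sqrt (eunorm g ^ 2 + 1) = β' :=
            div_mul_cancel₀ β' hsgpos.ne'
          calc (β' / Real.sqrt (eunorm g ^ 2 + 1)) * u i * Real.sqrt (eunorm g ^ 2 + 1) ^ 2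
              = (β' / Real.sqrt (eunorm g ^ 2 + 1) * Real.sqrt (eunorm g ^ 2 + 1))
                * (u i * Real.sqrt (eunorm g ^ 2 + 1)) := by ring
            _ = β' * (u i * Real.sqrt (eunorm g ^ 2 + 1)) := by rw [hc6]
            _ = β' * Real.sqrt (eunorm g ^ 2 + 1) * u i := by ring
        nlinarith [h4, h5]
      linarith [h3]
    -- assemble
    have hbddg : BddAbove {rr : ℝ | ∃ (Δ : Matrix (Fin k) (Fin H) ℝ) (ξ : Fin k → ℝ),
        frnorm (Matrix.of fun i => Sum.elim (Δ i) (fun _ : Unit => ξ i)) ≤ β' ∧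
        rr = eunorm ((A + Δ).mulVec g - (b + ξ))} := by
      refine ⟨eunorm (A.mulVec g - b) + β' * Real.sqrt (eunorm g ^ 2 + 1), ?_⟩
      rintro rr ⟨Δ, ξ, hfr, rfl⟩
      exact hub g Δ ξ hfr
    have hmemw : (eunorm (A.mulVec g - b) + β' * Real.sqrt (eunorm g ^ 2 + 1))
        ∈ {rr : ℝ | ∃ (Δ : Matrix (Fin k) (Fin H) ℝ) (ξ : Fin k → ℝ),
          frnorm (Matrix.of fun i => Sum.elim (Δ i) (fun _ : Unit => ξ i)) ≤ β' ∧
          rr = eunorm ((A + Δ).mulVec g - (b + ξ))} := by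
      exact ⟨Δw, ξw, hfrw, by rw [hresw, hu2]⟩
    refine le_trans (csSup_le ⟨_, hM0 gstar⟩ ?_) (le_trans hKI (le_csSup hbddg hmemw))
    rintro rr ⟨Δ, ξ, hfr, rfl⟩
    exact hub gstar Δ ξ hfr
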